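/- Let c(x) = (1-√(1-4x))/(2x) be the Catalan generating function over ℚ, and let f(x) = x/(1-x), g(x) = (1-2x)/(1-x)², φ(x) = x·c(x). Then φ = Rev(x²/f) (since x²/f = x(1-x)) and φ(x)·φ'(x)·g(φ(x))/f(φ(x)) = c(x). -/

import Mathlib

/-!
Put `φ = X c`. From `2 X c = 1 - s` and `s² = 1 - 4X` we get `φ² = φ - X`, i.e. `φ (1 - φ) = X`,
which is the reversion identity. Dividing by `X` gives `c (1 - φ) = 1`, so `(1 - X)⁻¹ ∘ φ = c`,
and differentiating gives `φ' (1 - 2φ) = 1`. Hence `φ φ' g(φ) = φ φ' (1 - 2φ) c² = φ c² = c f(φ)`.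
-/

open PowerSeries

/-- Composition `f ∘ a` of formal power series (intended for `a` with zero constant term). -/
noncomputable def psComp {R : Type*} [CommRing R] (f a : R⟦X⟧) : R⟦X⟧ :=
  PowerSeries.mk fun n => ∑ i ∈ Finset.range (n + 1), PowerSeries.coeff i f * PowerSeries.coeff n (a ^ i)

theorem psComp_eq_subst {R : Type*} [CommRing R] {a : R⟦X⟧} (ha : constantCoeff a = 0)
    (f : R⟦X⟧) : psComp f a = f.subst a := by
  ext n
  rw [psComp, coeff_mk, coeff_subst' (HasSubst.of_constantCoeff_zero' ha),
    finsum_eq_sum_of_support_subset _ (s := Finset.range (n + 1)) fun d hd => ?_]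
  · simp only [smul_eq_mul]
  · by_contra hdn
    refine hd ?_
    rw [Finset.coe_range, Set.mem_Iio, not_lt] at hdn
    dsimp only
    rw [X_pow_dvd_iff.1 (pow_dvd_pow_of_dvd (X_dvd_iff.2 ha) d) n (by omega), smul_zero]

namespace PowerSeries

theorem subst_inv {K : Type*} [Field K] {a : K⟦X⟧} (ha : constantCoeff a = 0) {f : K⟦X⟧}
    (hf : constantCoeff f ≠ 0) : f⁻¹.subst a = (f.subst a)⁻¹ := by
  have hmul : f⁻¹.subst a * f.subst a = 1 := by
    rw [← subst_mul (HasSubst.of_constantCoeff_zero' ha), PowerSeries.inv_mul_cancel f hf,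
      ← coe_substAlgHom (HasSubst.of_constantCoeff_zero' ha), map_one]
  refine (eq_inv_iff_mul_eq_one fun h0 => ?_).2 hmul
  simpa [h0] using congrArg constantCoeff hmul

section Catalan

variable {R : Type*} [CommRing R]

theorem sq_X_mul_eq_X_mul_sub_X [IsDomain R] [CharZero R] {s c : R⟦X⟧}
    (hs : s ^ 2 = 1 - 4 * X) (hc : 2 * X * c = 1 - s) : (X * c) ^ 2 = X * c - X := by
  have h4 : (4 : R⟦X⟧) * ((X * c) ^ 2 - (X * c - X)) = 0 := by
    linear_combination (2 * X * c - 1 - s) * hc + hs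
  have h40 : (4 : R⟦X⟧) ≠ 0 := fun h => by
    simpa [map_ofNat constantCoeff 4] using congrArg constantCoeff h
  exact sub_eq_zero.1 ((mul_eq_zero.1 h4).resolve_left h40)

theorem mul_one_sub_X_mul_eq_one {c : R⟦X⟧} (h : (X * c) ^ 2 = X * c - X) :
    c * (1 - X * c) = 1 :=
  X_mul_cancel (by linear_combination -h)

theorem derivative_mul_one_sub_two_mul {φ : R⟦X⟧} (h : φ ^ 2 = φ - X) :
    d⁄dX R φ * (1 - 2 * φ) = 1 := by
  have h' := congrArg (d⁄dX R) h
  rw [Derivation.leibniz_pow, map_sub, derivative_X] at h'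
  simp only [smul_eq_mul] at h'
  linear_combination -h'

end Catalan

end PowerSeries

theorem stmt18_general (s c : ℚ⟦X⟧)
    (hs : s ^ 2 = 1 - 4 * X)
    (hc : 2 * X * c = 1 - s) :
    psComp (X * (1 - X)) (X * c) = X ∧
    (X * c) * PowerSeries.derivativeFun (X * c) *
        psComp ((1 - 2 * X) * ((1 - X : ℚ⟦X⟧)⁻¹) ^ 2) (X * c) =
      c * psComp (X * (1 - X : ℚ⟦X⟧)⁻¹) (X * c) := by
  have hφ : (X * c) ^ 2 = X * c - X := sq_X_mul_eq_X_mul_sub_X hs hc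
  have h0 : constantCoeff (X * c) = 0 := by simp
  have hsubst := HasSubst.of_constantCoeff_zero' h0
  have hinv : (1 - X : ℚ⟦X⟧)⁻¹.subst (X * c) = c := by
    rw [subst_inv h0 (by simp), ← coe_substAlgHom hsubst, map_sub, map_one, substAlgHom_X,
      eq_comm, eq_inv_iff_mul_eq_one (by simp)]
    exact mul_one_sub_X_mul_eq_one hφ
  simp only [psComp_eq_subst h0, subst_mul hsubst, subst_pow hsubst, hinv]
  simp only [← coe_substAlgHom hsubst, map_sub, map_one, map_ofNat, map_mul, substAlgHom_X]
  refine ⟨by linear_combination -hφ, ?_⟩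
  rw [show derivativeFun (X * c) = d⁄dX ℚ (X * c) from rfl]
  linear_combination (X * c) * c ^ 2 * derivative_mul_one_sub_two_mul hφ

theorem stmt18 (s c : ℚ⟦X⟧)
    (hs : s ^ 2 = 1 - 4 * X) (hs0 : PowerSeries.constantCoeff s = 1)
    (hc : 2 * X * c = 1 - s) :
    psComp (X * (1 - X)) (X * c) = X ∧
    (X * c) * PowerSeries.derivativeFun (X * c) *
        psComp ((1 - 2 * X) * ((1 - X : ℚ⟦X⟧)⁻¹) ^ 2) (X * c) =
      c * psComp (X * (1 - X : ℚ⟦X⟧)⁻¹) (X * c) :=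
  stmt18_general s c hs hc
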